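/- arXiv:math/0109142 — 3 statements merged into one kernel-verified Lean document; each statement's English description precedes it below -/
import Mathlib

section
/- Let E be a directed graph and let v, w ∈ E⁰. Then ΣH(v) ∩ ΣH(w) ≠ ∅ if and only if there exists y ∈ E⁰ with v ≥ y and w ≥ y. -/
/-- A (countable) directed graph `E = (E⁰, E¹, r, s)`:
a set of vertices, a set of edges, and range and source maps. -/
structure Digraph' where
  V : Type
  E : Type
  src : E → V
  rng : E → V

namespace Digraph'

variable (G : Digraph')

/-- `v ≥ w`: there is a path (possibly of length zero) from `v` to `w`. -/
def Reach (v w : G.V) : Prop :=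
  Relation.ReflTransGen (fun a b : G.V => ∃ e : G.E, G.src e = a ∧ G.rng e = b) v w

/-- A set `H` of vertices is hereditary if `v ∈ H` and `v ≥ w` imply `w ∈ H`. -/
def Hereditary (H : Set G.V) : Prop :=
  ∀ ⦃v w : G.V⦄, v ∈ H → G.Reach v w → w ∈ H

/-- A set `X` of vertices is saturated if every vertex `v` with `0 < |s⁻¹(v)| < ∞`
all of whose emitted edges have range in `X` itself belongs to `X`. -/
def Saturated (X : Set G.V) : Prop :=
  ∀ v : G.V, (G.src ⁻¹' {v}).Finite → (G.src ⁻¹' {v}).Nonempty →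
    (∀ e : G.E, G.src e = v → G.rng e ∈ X) → v ∈ X

/-- The saturation `Σ(X)`: the smallest saturated set containing `X`. -/
def saturation (X : Set G.V) : Set G.V :=
  ⋂₀ {Y : Set G.V | G.Saturated Y ∧ X ⊆ Y}

/-- `ΣH(X)`: the smallest saturated hereditary set containing `X`. -/
def satHered (X : Set G.V) : Set G.V :=
  ⋂₀ {Y : Set G.V | G.Saturated Y ∧ G.Hereditary Y ∧ X ⊆ Y}

end Digraph'

/-!
The descendants of `v` form a hereditary set, and saturating a hereditary set keeps it
hereditary, so `ΣH(v)` lies in the saturation of the descendants of `v`; by induction on the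
saturation, every vertex there reaches a descendant of `v`. Given `x ∈ ΣH(v) ∩ ΣH(w)`, take `y`
with `v ≥ y` and `x ≥ y`; heredity puts `y` in `ΣH(w)`, so `y ≥ z` for some `z` with `w ≥ z`.
-/

namespace Digraph'

variable {G : Digraph'}

lemma Reach.refl (v : G.V) : G.Reach v v := Relation.ReflTransGen.refl

lemma Reach.trans {u v w : G.V} (huv : G.Reach u v) (hvw : G.Reach v w) : G.Reach u w :=
  Relation.ReflTransGen.trans huv hvw

/-- The saturation `Σ(D)`, generated from below. -/
inductive SatGen (G : Digraph') (D : Set G.V) : G.V → Prop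
  | base {x : G.V} (hx : x ∈ D) : SatGen G D x
  | step {x : G.V} (hfin : (G.src ⁻¹' {x}).Finite) (hne : (G.src ⁻¹' {x}).Nonempty)
      (h : ∀ e : G.E, G.src e = x → SatGen G D (G.rng e)) : SatGen G D x

lemma saturated_setOf_satGen (D : Set G.V) : G.Saturated {x | SatGen G D x} :=
  fun _ hfin hne h => SatGen.step hfin hne h

lemma Hereditary.setOf_satGen {D : Set G.V} (hD : G.Hereditary D) :
    G.Hereditary {x | SatGen G D x} := by
  intro x z hx hxz
  induction hx generalizing z with
  | base hx => exact SatGen.base (hD hx hxz)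
  | step hfin hne h ih =>
    rcases Relation.ReflTransGen.cases_head hxz with rfl | ⟨b, ⟨e, he, rfl⟩, hbz⟩
    · exact SatGen.step hfin hne h
    · exact ih e he hbz

lemma SatGen.exists_reach {D : Set G.V} {x : G.V} (hx : SatGen G D x) :
    ∃ y ∈ D, G.Reach x y := by
  induction hx with
  | base hx => exact ⟨_, hx, Reach.refl _⟩
  | step _ hne _ ih =>
    obtain ⟨e, he⟩ := hne
    obtain ⟨y, hy, hr⟩ := ih e he
    exact ⟨y, hy, Relation.ReflTransGen.head ⟨e, he, rfl⟩ hr⟩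

lemma hereditary_setOf_reach (v : G.V) : G.Hereditary {x | G.Reach v x} :=
  fun _ _ h h' => h.trans h'

lemma subset_satHered (X : Set G.V) : X ⊆ G.satHered X :=
  fun _ hx _ hY => hY.2.2 hx

lemma hereditary_satHered (X : Set G.V) : G.Hereditary (G.satHered X) :=
  fun _ _ hx hxy _ hY => hY.2.1 (hx _ hY) hxy

lemma mem_satHered_singleton_of_reach {v y : G.V} (h : G.Reach v y) :
    y ∈ G.satHered {v} :=
  hereditary_satHered _ (subset_satHered _ rfl) h

lemma exists_reach_of_mem_satHered_singleton {v x : G.V} (hx : x ∈ G.satHered {v}) :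
    ∃ y, G.Reach v y ∧ G.Reach x y := by
  have hsat : SatGen G {x | G.Reach v x} x :=
    hx _ ⟨saturated_setOf_satGen _, (hereditary_setOf_reach v).setOf_satGen,
      by rintro _ rfl; exact SatGen.base (Reach.refl _)⟩
  exact hsat.exists_reach

end Digraph'

theorem stmt_7_general (G : Digraph') (v w : G.V) :
    (G.satHered {v} ∩ G.satHered {w}).Nonempty ↔
      ∃ y : G.V, G.Reach v y ∧ G.Reach w y := by
  constructor
  · rintro ⟨x, hxv, hxw⟩
    obtain ⟨y, hvy, hxy⟩ := Digraph'.exists_reach_of_mem_satHered_singleton hxv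
    obtain ⟨z, hwz, hyz⟩ :=
      Digraph'.exists_reach_of_mem_satHered_singleton (Digraph'.hereditary_satHered _ hxw hxy)
    exact ⟨z, hvy.trans hyz, hwz⟩
  · rintro ⟨y, hvy, hwy⟩
    exact ⟨y, Digraph'.mem_satHered_singleton_of_reach hvy,
      Digraph'.mem_satHered_singleton_of_reach hwy⟩

/-- `ΣH(v) ∩ ΣH(w) ≠ ∅` iff `v` and `w` can reach a common vertex. -/
theorem stmt_7 (G : Digraph') [Countable G.V] [Countable G.E] (v w : G.V) :
    (G.satHered {v} ∩ G.satHered {w}).Nonempty ↔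
      ∃ y : G.V, G.Reach v y ∧ G.Reach w y :=
  stmt_7_general G v w
end

section
/- Let E be a directed graph, A a C*-algebra, {S_e, P_v} a Cuntz-Krieger E-family in A, and H ⊆ E⁰ a hereditary subset. Let C*(S, P) denote the C*-subalgebra of A generated by {S_e : e ∈ E¹} ∪ {P_v : v ∈ E⁰}. Then the closed two-sided ideal of C*(S, P) generated by {P_v : v ∈ H} equals the closed linear span of {S_α P_v S_β* : α, β paths in E, v ∈ H, r(α) = r(β) = v}. -/
namespace Digraph'

/-- A Cuntz-Krieger `E`-family in a C*-algebra `A`: mutually orthogonal projections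
`P v`, elements `S e` with mutually orthogonal range projections, satisfying the
Cuntz-Krieger relations (G1)–(G3). -/
structure IsCKFamily (G : Digraph') {A : Type*} [NonUnitalCStarAlgebra A]
    [PartialOrder A] [StarOrderedRing A] (P : G.V → A) (S : G.E → A) : Prop where
  proj_star : ∀ v : G.V, star (P v) = P v
  proj_idem : ∀ v : G.V, P v * P v = P v
  proj_orth : ∀ v w : G.V, v ≠ w → P v * P w = 0
  range_orth : ∀ e f : G.E, e ≠ f → (S e * star (S e)) * (S f * star (S f)) = 0
  ck1 : ∀ e : G.E, star (S e) * S e = P (G.rng e)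
  ck2 : ∀ e : G.E, S e * star (S e) ≤ P (G.src e)
  ck3 : ∀ v : G.V, (G.src ⁻¹' {v}).Finite → (G.src ⁻¹' {v}).Nonempty →
    P v = ∑ᶠ e ∈ G.src ⁻¹' {v}, S e * star (S e)

end Digraph'

/-- `J` is a closed two-sided ideal of the subalgebra (given as the subset `B`)
of the ambient C*-algebra. -/
def IsClosedIdealOf {A : Type*} [NonUnitalCStarAlgebra A] (B J : Set A) : Prop :=
  J ⊆ B ∧ IsClosed J ∧ (0 : A) ∈ J ∧
  (∀ a b : A, a ∈ J → b ∈ J → a + b ∈ J) ∧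
  (∀ (c : ℂ) (a : A), a ∈ J → c • a ∈ J) ∧
  (∀ b a : A, b ∈ B → a ∈ J → b * a ∈ J ∧ a * b ∈ J)

/-- The closed two-sided ideal of the subalgebra `B` generated by a subset `X`. -/
def closedIdealGenIn {A : Type*} [NonUnitalCStarAlgebra A] (B X : Set A) : Set A :=
  ⋂₀ {J : Set A | IsClosedIdealOf B J ∧ X ⊆ J}

/-- The C*-subalgebra `C*(S, P)` of `A` generated by a Cuntz-Krieger family,
regarded as a subset of `A`: the closure of the non-unital star subalgebra
generated by the `S e` and the `P v`. -/
def cstarSP {A : Type*} [NonUnitalCStarAlgebra A] (G : Digraph')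
    (P : G.V → A) (S : G.E → A) : Set A :=
  closure ((NonUnitalStarAlgebra.adjoin ℂ (Set.range S ∪ Set.range P) :
    NonUnitalStarSubalgebra ℂ A) : Set A)

namespace Digraph'

variable (G : Digraph')

/-- `IsPathFrom v l`: the list of edges `l` is a path starting at the vertex `v`
(vertices are regarded as paths of length 0). -/
def IsPathFrom (v : G.V) : List G.E → Prop
  | [] => True
  | e :: l => G.src e = v ∧ IsPathFrom (G.rng e) l

/-- The range of the path starting at `v` with edge list `l`. -/
def pathEnd (v : G.V) : List G.E → G.V
  | [] => v
  | e :: l => pathEnd (G.rng e) l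

/-- `S_α` for a path `α` starting at `v` with edge list `l`: the product
`S_{α₁} ⋯ S_{αₙ}` for paths of positive length, and `S_v := P v` for the path of
length 0. -/
def sPath {A : Type*} [NonUnitalCStarAlgebra A] (P : G.V → A) (S : G.E → A) :
    G.V → List G.E → A
  | v, [] => P v
  | _, [e] => S e
  | _, e :: l => S e * sPath P S (G.rng e) l

end Digraph'

/-! The closed span `I` of the monomials `S_α P_v S_β^*` (`v ∈ H`) contains the generators
`P_v = S_v P_v S_v^*` and lies in every closed ideal containing them, so it suffices to see that
`I` is an ideal of `C*(S, P)`. Since `I` is self-adjoint, it is enough that left multiplication by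
`P_w`, `S_e` and `S_e^*` maps each monomial into the span: the Cuntz-Krieger relations either kill
the product or turn it into another monomial, and for `S_e^* P_v S_β^*` with `s(e) = v` the new
middle vertex `r(e)` stays in `H` because `H` is hereditary. -/

theorem Submodule.mul_mem_span_of_forall_mul_mem {R A : Type*} [CommSemiring R]
    [NonUnitalSemiring A] [Module R A] [SMulCommClass R A A] {X : Set A} {t : A}
    (h : ∀ x ∈ X, t * x ∈ Submodule.span R X) {y : A} (hy : y ∈ Submodule.span R X) :
    t * y ∈ Submodule.span R X :=
  (Submodule.span_le (p := (Submodule.span R X).comap (LinearMap.mulLeft R t))).mpr h hy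

theorem Submodule.star_mem_span_of_forall_star_mem {R A : Type*} [CommSemiring R] [StarRing R]
    [AddCommMonoid A] [StarAddMonoid A] [Module R A] [StarModule R A] {X : Set A}
    (h : ∀ x ∈ X, star x ∈ X) {y : A} (hy : y ∈ Submodule.span R X) : star y ∈ Submodule.span R X := by
  induction hy using Submodule.span_induction with
  | mem x hx => exact Submodule.subset_span (h x hx)
  | zero => simp
  | add x y _ _ hx hy => simpa only [star_add] using add_mem hx hy
  | smul c x _ hx => simpa only [star_smul] using Submodule.smul_mem _ (star c) hx

theorem NonUnitalStarAlgebra.mul_mem_of_mem_adjoin {R A : Type*} [CommSemiring R] [StarRing R]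
    [NonUnitalSemiring A] [StarRing A] [Module R A] [IsScalarTower R A A] [SMulCommClass R A A]
    [StarModule R A] (M : Submodule R A)
    (hM : ∀ y ∈ M, star y ∈ M) {T : Set A}
    (hT : ∀ t ∈ T, ∀ y ∈ M, t * y ∈ M ∧ star t * y ∈ M)
    {b : A} (hb : b ∈ NonUnitalStarAlgebra.adjoin R T) :
    ∀ y ∈ M, b * y ∈ M ∧ y * b ∈ M := by
  induction hb using NonUnitalStarAlgebra.adjoin_induction with
  | mem t ht =>
    refine fun y hy => ⟨(hT t ht y hy).1, ?_⟩
    simpa only [star_mul, star_star] using hM _ ((hT t ht _ (hM y hy)).2)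
  | add x y _ _ hx hy =>
    exact fun z hz => ⟨by simpa only [add_mul] using add_mem (hx z hz).1 (hy z hz).1,
      by simpa only [mul_add] using add_mem (hx z hz).2 (hy z hz).2⟩
  | zero => simp
  | mul x y _ _ hx hy =>
    exact fun z hz => ⟨by simpa only [mul_assoc] using (hx _ (hy z hz).1).1,
      by simpa only [mul_assoc] using (hy _ (hx z hz).2).2⟩
  | smul c x _ hx =>
    exact fun z hz => ⟨by simpa only [smul_mul_assoc] using M.smul_mem c (hx z hz).1,
      by simpa only [mul_smul_comm] using M.smul_mem c (hx z hz).2⟩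
  | star x _ hx =>
    exact fun z hz => ⟨by simpa only [star_mul, star_star] using hM _ (hx _ (hM z hz)).2,
      by simpa only [star_mul, star_star] using hM _ (hx _ (hM z hz)).1⟩

section ClosedIdeal

variable {A : Type*} [NonUnitalCStarAlgebra A]

theorem isClosedIdealOf_closure {B : Set A} (M : Submodule ℂ A) (hMB : (M : Set A) ⊆ B)
    (hmul : ∀ b ∈ B, ∀ y ∈ M, b * y ∈ M ∧ y * b ∈ M) :
    IsClosedIdealOf (closure B) (closure M) := by
  rw [← Submodule.topologicalClosure_coe]
  refine ⟨?_, M.isClosed_topologicalClosure, zero_mem _, fun _ _ => add_mem,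
    fun c _ => Submodule.smul_mem _ c, fun b y hb hy => ⟨?_, ?_⟩⟩
  · rw [Submodule.topologicalClosure_coe]
    exact closure_mono hMB
  all_goals rw [Submodule.topologicalClosure_coe] at hy ⊢
  · exact map_mem_closure₂ continuous_mul hb hy fun u hu z hz => (hmul u hu z hz).1
  · exact map_mem_closure₂ continuous_mul hy hb fun z hz u hu => (hmul u hu z hz).2

theorem closure_span_subset_of_isClosedIdealOf {B J X : Set A} (hJ : IsClosedIdealOf B J)
    (hXJ : X ⊆ J) : closure (Submodule.span ℂ X : Set A) ⊆ J := by
  obtain ⟨-, hJclosed, hJ0, hJadd, hJsmul, -⟩ := hJ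
  refine closure_minimal (fun y hy => ?_) hJclosed
  induction hy using Submodule.span_induction with
  | mem x hx => exact hXJ hx
  | zero => exact hJ0
  | add x y _ _ hx hy => exact hJadd x y hx hy
  | smul c x _ hx => exact hJsmul c x hx

end ClosedIdeal

theorem mul_eq_self_of_star_mul_self_eq {A : Type*} [NonUnitalCStarAlgebra A] {p s : A}
    (hp : IsStarProjection p) (hs : star s * s = p) : s * p = s := by
  rw [← sub_eq_zero, ← CStarRing.star_mul_self_eq_zero_iff]
  have hp' : star p = p := hp.isSelfAdjoint
  calc star (s * p - s) * (s * p - s)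
      = p * (star s * s) * p - p * (star s * s) - (star s * s) * p + star s * s := by
        simp only [star_sub, star_mul, hp']; noncomm_ring
    _ = 0 := by simp only [hs, hp.isIdempotentElem.eq]; abel

namespace Digraph'

variable {G : Digraph'}

theorem isPathFrom_append_singleton {a : G.V} {l : List G.E} (h : G.IsPathFrom a l) {e : G.E}
    (he : G.pathEnd a l = G.src e) :
    G.IsPathFrom a (l ++ [e]) ∧ G.pathEnd a (l ++ [e]) = G.rng e := by
  induction l generalizing a with
  | nil => exact ⟨⟨he.symm, trivial⟩, rfl⟩
  | cons f l ih =>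
    obtain ⟨ih1, ih2⟩ := ih h.2 he
    exact ⟨⟨h.1, ih1⟩, ih2⟩

theorem sPath_mem_adjoin {A : Type*} [NonUnitalCStarAlgebra A] (P : G.V → A) (S : G.E → A)
    (a : G.V) (l : List G.E) :
    G.sPath P S a l ∈ NonUnitalStarAlgebra.adjoin ℂ (Set.range S ∪ Set.range P) := by
  induction l generalizing a with
  | nil => exact NonUnitalStarAlgebra.subset_adjoin ℂ _ (Or.inr ⟨a, rfl⟩)
  | cons e l ih =>
    have hSe := NonUnitalStarAlgebra.subset_adjoin ℂ (Set.range S ∪ Set.range P) (Or.inl ⟨e, rfl⟩)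
    cases l with
    | nil => exact hSe
    | cons f l => exact mul_mem hSe (ih _)

def pathMonomials {A : Type*} [NonUnitalCStarAlgebra A] (P : G.V → A) (S : G.E → A)
    (H : Set G.V) : Set A :=
  {x : A | ∃ v ∈ H, ∃ (a : G.V) (α : List G.E) (b : G.V) (β : List G.E),
    G.IsPathFrom a α ∧ G.pathEnd a α = v ∧
    G.IsPathFrom b β ∧ G.pathEnd b β = v ∧
    x = G.sPath P S a α * P v * star (G.sPath P S b β)}

theorem pathMonomials_subset_adjoin {A : Type*} [NonUnitalCStarAlgebra A] (P : G.V → A)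
    (S : G.E → A) (H : Set G.V) :
    G.pathMonomials P S H ⊆ NonUnitalStarAlgebra.adjoin ℂ (Set.range S ∪ Set.range P) := by
  rintro x ⟨v, -, a, α, b, β, -, -, -, -, rfl⟩
  exact mul_mem (mul_mem (G.sPath_mem_adjoin P S a α)
    (NonUnitalStarAlgebra.subset_adjoin ℂ _ (Or.inr ⟨v, rfl⟩)))
    (star_mem (G.sPath_mem_adjoin P S b β))

namespace IsCKFamily

variable {A : Type*} [NonUnitalCStarAlgebra A] [PartialOrder A] [StarOrderedRing A]
  {P : G.V → A} {S : G.E → A} (hCK : G.IsCKFamily P S) {H : Set G.V}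
include hCK

theorem isStarProjection (v : G.V) : IsStarProjection (P v) :=
  ⟨hCK.proj_idem v, hCK.proj_star v⟩

theorem S_mul_P_rng (e : G.E) : S e * P (G.rng e) = S e :=
  mul_eq_self_of_star_mul_self_eq (hCK.isStarProjection _) (hCK.ck1 e)

theorem S_mul_star_S_mul_S (e : G.E) : S e * star (S e) * S e = S e := by
  rw [mul_assoc, hCK.ck1, hCK.S_mul_P_rng]

theorem P_src_mul_S (e : G.E) : P (G.src e) * S e = S e := by
  have h := ((hCK.isStarProjection (G.src e)).mul_right_and_mul_left_of_nonneg_of_le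
    (mul_star_self_nonneg (S e)) (hCK.ck2 e)).2
  calc P (G.src e) * S e = P (G.src e) * (S e * star (S e)) * S e := by
        rw [mul_assoc, mul_assoc, ← mul_assoc (S e), hCK.S_mul_star_S_mul_S]
    _ = S e := by rw [h, hCK.S_mul_star_S_mul_S]

theorem P_mul_S_of_ne {v : G.V} {e : G.E} (h : v ≠ G.src e) : P v * S e = 0 := by
  rw [← hCK.P_src_mul_S, ← mul_assoc, hCK.proj_orth v _ h, zero_mul]

theorem star_S_mul_S_of_ne {e f : G.E} (hef : e ≠ f) : star (S e) * S f = 0 := by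
  rw [← hCK.S_mul_star_S_mul_S e, ← hCK.S_mul_star_S_mul_S f]
  calc star (S e * star (S e) * S e) * (S f * star (S f) * S f)
      = star (S e) * ((S e * star (S e)) * (S f * star (S f))) * S f := by
        simp only [star_mul, star_star]; noncomm_ring
    _ = 0 := by rw [hCK.range_orth e f hef, mul_zero, zero_mul]

theorem sPath_cons (a : G.V) (e : G.E) (l : List G.E) :
    G.sPath P S a (e :: l) = S e * G.sPath P S (G.rng e) l := by
  cases l with
  | nil => exact (hCK.S_mul_P_rng e).symm
  | cons f l => rfl

theorem P_mul_sPath {a : G.V} {l : List G.E} (h : G.IsPathFrom a l) :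
    P a * G.sPath P S a l = G.sPath P S a l := by
  cases l with
  | nil => exact hCK.proj_idem a
  | cons e l => rw [hCK.sPath_cons, ← mul_assoc, ← h.1, hCK.P_src_mul_S]

theorem P_mul_sPath_of_ne {a w : G.V} {l : List G.E} (h : G.IsPathFrom a l) (hw : w ≠ a) :
    P w * G.sPath P S a l = 0 := by
  cases l with
  | nil => exact hCK.proj_orth w a hw
  | cons e l => rw [hCK.sPath_cons, ← mul_assoc, hCK.P_mul_S_of_ne (h.1 ▸ hw), zero_mul]

theorem sPath_append_singleton {a : G.V} {l : List G.E} (h : G.IsPathFrom a l) {e : G.E}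
    (he : G.pathEnd a l = G.src e) :
    G.sPath P S a (l ++ [e]) = G.sPath P S a l * S e := by
  induction l generalizing a with
  | nil =>
    change S e = P a * S e
    rw [show a = G.src e from he, hCK.P_src_mul_S]
  | cons f l ih =>
    rw [List.cons_append, hCK.sPath_cons, hCK.sPath_cons, ih h.2 he, mul_assoc]

theorem star_S_mul_P_src (e : G.E) : star (S e) * P (G.src e) = star (S e) := by
  rw [← hCK.proj_star, ← star_mul, hCK.P_src_mul_S]

theorem star_S_mul_P_of_ne {v : G.V} {e : G.E} (h : v ≠ G.src e) : star (S e) * P v = 0 := by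
  rw [← hCK.proj_star, ← star_mul, hCK.P_mul_S_of_ne h, star_zero]

theorem P_rng_mul_star_S (e : G.E) : P (G.rng e) * star (S e) = star (S e) := by
  rw [← hCK.proj_star, ← star_mul, hCK.S_mul_P_rng]

theorem P_mem_pathMonomials {v : G.V} (hv : v ∈ H) : P v ∈ G.pathMonomials P S H :=
  ⟨v, hv, v, [], v, [], trivial, rfl, trivial, rfl, by
    change P v = P v * P v * star (P v)
    rw [hCK.proj_star, hCK.proj_idem, hCK.proj_idem]⟩

theorem star_mem_pathMonomials {x : A} (hx : x ∈ G.pathMonomials P S H) :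
    star x ∈ G.pathMonomials P S H := by
  obtain ⟨v, hv, a, α, b, β, hα, hαv, hβ, hβv, rfl⟩ := hx
  refine ⟨v, hv, b, β, a, α, hβ, hβv, hα, hαv, ?_⟩
  simp only [star_mul, star_star, hCK.proj_star, mul_assoc]

theorem P_mul_mem_span_pathMonomials (w : G.V) {x : A} (hx : x ∈ G.pathMonomials P S H) :
    P w * x ∈ Submodule.span ℂ (G.pathMonomials P S H) := by
  obtain ⟨v, hv, a, α, b, β, hα, hαv, hβ, hβv, rfl⟩ := hx
  simp only [← mul_assoc]
  by_cases hwa : w = a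
  · subst hwa
    rw [hCK.P_mul_sPath hα]
    exact Submodule.subset_span ⟨v, hv, w, α, b, β, hα, hαv, hβ, hβv, rfl⟩
  · rw [hCK.P_mul_sPath_of_ne hα hwa, zero_mul, zero_mul]
    exact zero_mem _

theorem S_mul_mem_span_pathMonomials (e : G.E) {x : A} (hx : x ∈ G.pathMonomials P S H) :
    S e * x ∈ Submodule.span ℂ (G.pathMonomials P S H) := by
  obtain ⟨v, hv, a, α, b, β, hα, hαv, hβ, hβv, rfl⟩ := hx
  simp only [← mul_assoc]
  by_cases hea : G.rng e = a
  · subst hea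
    rw [← hCK.sPath_cons (G.src e)]
    exact Submodule.subset_span ⟨v, hv, G.src e, e :: α, b, β, ⟨rfl, hα⟩, hαv, hβ, hβv, rfl⟩
  · rw [← hCK.S_mul_P_rng e, mul_assoc (S e), hCK.P_mul_sPath_of_ne hα hea]
    simp

/-- Heredity of `H` enters here: `S_e^* P_v S_β^* = P_{r(e)} S_{βe}^*` with `r(e) ∈ H`. -/
theorem star_S_mul_mem_span_pathMonomials (hH : G.Hereditary H) (e : G.E) {x : A}
    (hx : x ∈ G.pathMonomials P S H) :
    star (S e) * x ∈ Submodule.span ℂ (G.pathMonomials P S H) := by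
  obtain ⟨v, hv, a, α, b, β, hα, hαv, hβ, hβv, rfl⟩ := hx
  simp only [← mul_assoc]
  cases α with
  | nil =>
    obtain rfl : a = v := hαv
    change star (S e) * P a * P a * star (G.sPath P S b β) ∈ _
    by_cases hea : a = G.src e
    · subst hea
      have hr : G.rng e ∈ H := hH hv (Relation.ReflTransGen.single ⟨e, rfl, rfl⟩)
      obtain ⟨hβe, hβer⟩ := isPathFrom_append_singleton hβ hβv
      refine Submodule.subset_span ⟨G.rng e, hr, G.rng e, [], b, β ++ [e], trivial, rfl,
        hβe, hβer, ?_⟩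
      change _ = P (G.rng e) * P (G.rng e) * star (G.sPath P S b (β ++ [e]))
      rw [hCK.sPath_append_singleton hβ hβv, star_mul, hCK.star_S_mul_P_src,
        hCK.star_S_mul_P_src, ← mul_assoc, mul_assoc (P _), hCK.P_rng_mul_star_S,
        hCK.P_rng_mul_star_S]
    · rw [hCK.star_S_mul_P_of_ne hea]
      simp
  | cons f α =>
    rw [hCK.sPath_cons]
    by_cases hef : e = f
    · subst hef
      rw [← mul_assoc, hCK.ck1, hCK.P_mul_sPath hα.2]
      exact Submodule.subset_span ⟨v, hv, G.rng e, α, b, β, hα.2, hαv, hβ, hβv, rfl⟩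
    · rw [← mul_assoc, hCK.star_S_mul_S_of_ne hef]
      simp

theorem mul_mem_span_pathMonomials_of_mem_adjoin (hH : G.Hereditary H) {b : A}
    (hb : b ∈ NonUnitalStarAlgebra.adjoin ℂ (Set.range S ∪ Set.range P)) :
    ∀ y ∈ Submodule.span ℂ (G.pathMonomials P S H),
      b * y ∈ Submodule.span ℂ (G.pathMonomials P S H) ∧
      y * b ∈ Submodule.span ℂ (G.pathMonomials P S H) := by
  refine NonUnitalStarAlgebra.mul_mem_of_mem_adjoin _
    (fun y => Submodule.star_mem_span_of_forall_star_mem fun x => hCK.star_mem_pathMonomials)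
    ?_ hb
  rintro t (⟨e, rfl⟩ | ⟨w, rfl⟩) y hy
  · exact ⟨Submodule.mul_mem_span_of_forall_mul_mem
        (fun x => hCK.S_mul_mem_span_pathMonomials e) hy,
      Submodule.mul_mem_span_of_forall_mul_mem
        (fun x => hCK.star_S_mul_mem_span_pathMonomials hH e) hy⟩
  · rw [hCK.proj_star]
    exact (and_self _).mpr (Submodule.mul_mem_span_of_forall_mul_mem
      (fun x => hCK.P_mul_mem_span_pathMonomials w) hy)

end IsCKFamily

end Digraph'

theorem stmt_12_general (G : Digraph')
    {A : Type*} [NonUnitalCStarAlgebra A] [PartialOrder A] [StarOrderedRing A]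
    (P : G.V → A) (S : G.E → A) (hCK : G.IsCKFamily P S)
    (H : Set G.V) (hH : G.Hereditary H) :
    closedIdealGenIn (cstarSP G P S) {x : A | ∃ v ∈ H, x = P v} =
      closure (Submodule.span ℂ
        {x : A | ∃ v ∈ H, ∃ (a : G.V) (α : List G.E) (b : G.V) (β : List G.E),
          G.IsPathFrom a α ∧ G.pathEnd a α = v ∧
          G.IsPathFrom b β ∧ G.pathEnd b β = v ∧
          x = G.sPath P S a α * P v * star (G.sPath P S b β)} : Set A) := by
  change _ = closure (Submodule.span ℂ (G.pathMonomials P S H) : Set A)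
  have hideal : IsClosedIdealOf (cstarSP G P S)
      (closure (Submodule.span ℂ (G.pathMonomials P S H) : Set A)) :=
    isClosedIdealOf_closure _
      (Submodule.span_le.mpr (G.pathMonomials_subset_adjoin P S H))
      fun b hb => hCK.mul_mem_span_pathMonomials_of_mem_adjoin hH hb
  refine subset_antisymm (Set.sInter_subset_of_mem ⟨hideal, ?_⟩) (Set.subset_sInter ?_)
  · rintro x ⟨v, hv, rfl⟩
    exact subset_closure (Submodule.subset_span (hCK.P_mem_pathMonomials hv))
  · rintro J ⟨hJ, hPJ⟩
    refine closure_span_subset_of_isClosedIdealOf hJ ?_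
    obtain ⟨-, -, -, -, -, hJmul⟩ := hJ
    rintro x ⟨v, hv, a, α, b, β, -, -, -, -, rfl⟩
    have hSα : G.sPath P S a α ∈ cstarSP G P S := subset_closure (G.sPath_mem_adjoin P S a α)
    have hSβ : star (G.sPath P S b β) ∈ cstarSP G P S :=
      subset_closure (star_mem (G.sPath_mem_adjoin P S b β))
    exact (hJmul _ _ hSβ (hJmul _ _ hSα (hPJ ⟨v, hv, rfl⟩)).1).2

/-- For a hereditary set `H`, the closed two-sided ideal of `C*(S, P)`
generated by `{P v : v ∈ H}` is the closed linear span of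
`{S_α P_v S_β* : v ∈ H, r(α) = r(β) = v}`. -/
theorem stmt_12 (G : Digraph') [Countable G.V] [Countable G.E]
    {A : Type*} [NonUnitalCStarAlgebra A] [PartialOrder A] [StarOrderedRing A]
    (P : G.V → A) (S : G.E → A) (hCK : G.IsCKFamily P S)
    (H : Set G.V) (hH : G.Hereditary H) :
    closedIdealGenIn (cstarSP G P S) {x : A | ∃ v ∈ H, x = P v} =
      closure (Submodule.span ℂ
        {x : A | ∃ v ∈ H, ∃ (a : G.V) (α : List G.E) (b : G.V) (β : List G.E),
          G.IsPathFrom a α ∧ G.pathEnd a α = v ∧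
          G.IsPathFrom b β ∧ G.pathEnd b β = v ∧
          x = G.sPath P S a α * P v * star (G.sPath P S b β)} : Set A) :=
  stmt_12_general G P S hCK H hH
end

section
/- Let E be a directed graph, A a C*-algebra, {S_e, P_v} a Cuntz-Krieger E-family in A, and let v, w ∈ E⁰ be two distinct sinks of E (vertices with s⁻¹(v) = s⁻¹(w) = ∅). Let C*(S, P) denote the C*-subalgebra of A generated by {S_e : e ∈ E¹} ∪ {P_v : v ∈ E⁰}, and let I_v and I_w be the closed two-sided ideals of C*(S, P) generated by P_v and P_w respectively. Then I_v and I_w are mutually orthogonal: a·b = 0 for all a ∈ I_v and b ∈ I_w (in particular I_v ∩ I_w = {0}). -/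
/-!
Since `v` is a sink, `P v * S e = 0` for every edge `e`; hence `P v` times any element of the
`*`-algebra generated by the family lies in the span of the `P v * star μ`, `μ` a product of
`S e`'s and `P u`'s. For the sink `w`, `P w * μ` is `0` or `P w`, so all of these are killed by
`P w` on the right, and by continuity `P v * b * P w = 0` for all `b ∈ C*(S, P)`. Passing twice to
annihilator ideals, the closed ideals generated by `P v` and `P w` then annihilate each other, and
in a C*-algebra such ideals meet in `0` because `a * (star a * a) = 0` forces `a = 0`.
-/

section CStarRing

variable {A : Type*} [NonUnitalNormedRing A] [StarRing A] [CStarRing A]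

theorem mul_star_mul_self_of_isIdempotentElem {s : A} (h : IsIdempotentElem (star s * s)) :
    s * (star s * s) = s := by
  set p := star s * s with hp
  have hsa : star p = p := by rw [hp, star_mul, star_star]
  have key : star (s * p - s) * (s * p - s) = p * p * p - p * p - p * p + p := by
    rw [star_sub, star_mul, hsa, hp]; noncomm_ring
  rw [h.eq, h.eq, sub_self, zero_sub, neg_add_cancel] at key
  exact sub_eq_zero.mp ((CStarRing.star_mul_self_eq_zero_iff _).mp key)

theorem eq_zero_of_mul_star_mul_self_eq_zero {a : A} (h : a * (star a * a) = 0) : a = 0 := by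
  have h' : star (star a * a) * (star a * a) = 0 := by
    rw [star_mul, star_star, mul_assoc, h, mul_zero]
  exact (CStarRing.star_mul_self_eq_zero_iff a).mp
    ((CStarRing.star_mul_self_eq_zero_iff _).mp h')

end CStarRing

def Submodule.rightStabilizer {R A : Type*} [CommSemiring R] [NonUnitalSemiring A] [Module R A]
    [SMulCommClass R A A] (M : Submodule R A) : NonUnitalSubalgebra R A where
  carrier := {d | ∀ r ∈ M, r * d ∈ M}
  add_mem' hd he r hr := by rw [mul_add]; exact add_mem (hd r hr) (he r hr)
  zero_mem' r _ := by rw [mul_zero]; exact zero_mem M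
  mul_mem' hd he r hr := by rw [← mul_assoc]; exact he _ (hd r hr)
  smul_mem' c d hd r hr := by rw [mul_smul_comm]; exact M.smul_mem c (hd r hr)

theorem Submodule.mem_rightStabilizer_span {R A : Type*} [CommSemiring R] [NonUnitalSemiring A]
    [Module R A] [SMulCommClass R A A] [IsScalarTower R A A] {W : Set A} {g : A}
    (h : ∀ y ∈ W, y * g ∈ span R W) : g ∈ (span R W).rightStabilizer := by
  intro r hr
  induction hr using Submodule.span_induction with
  | mem y hy => exact h y hy
  | zero => rw [zero_mul]; exact zero_mem _
  | add x y _ _ hx hy => rw [add_mul]; exact add_mem hx hy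
  | smul c x _ hx => rw [smul_mul_assoc]; exact Submodule.smul_mem _ c hx

section ClosedIdeals

variable {A : Type*} [NonUnitalCStarAlgebra A]

theorem closedIdealGenIn_subset {B X J : Set A} (hJ : IsClosedIdealOf B J) (hXJ : X ⊆ J) :
    closedIdealGenIn B X ⊆ J :=
  Set.sInter_subset_of_mem ⟨hJ, hXJ⟩

variable {B : NonUnitalSubalgebra ℂ A}

theorem isClosedIdealOf_self (hB : IsClosed (B : Set A)) : IsClosedIdealOf (B : Set A) B :=
  ⟨subset_rfl, hB, zero_mem B, fun _ _ => add_mem, fun c _ ha => SMulMemClass.smul_mem c ha,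
    fun _ _ hb ha => ⟨mul_mem hb ha, mul_mem ha hb⟩⟩

theorem isClosedIdealOf_closedIdealGenIn (hB : IsClosed (B : Set A)) {X : Set A}
    (hX : X ⊆ B) : IsClosedIdealOf B (closedIdealGenIn B X) := by
  have mem {a : A} : a ∈ closedIdealGenIn B X ↔
      ∀ J : Set A, IsClosedIdealOf B J ∧ X ⊆ J → a ∈ J := Set.mem_sInter
  refine ⟨closedIdealGenIn_subset (isClosedIdealOf_self hB) hX,
    isClosed_sInter fun J hJ => hJ.1.2.1, mem.2 fun J hJ => hJ.1.2.2.1,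
    fun a b ha hb => mem.2 fun J hJ => hJ.1.2.2.2.1 a b (mem.1 ha J hJ) (mem.1 hb J hJ),
    fun c a ha => mem.2 fun J hJ => hJ.1.2.2.2.2.1 c a (mem.1 ha J hJ),
    fun b a hb ha => ⟨mem.2 fun J hJ => (hJ.1.2.2.2.2.2 b a hb (mem.1 ha J hJ)).1,
      mem.2 fun J hJ => (hJ.1.2.2.2.2.2 b a hb (mem.1 ha J hJ)).2⟩⟩

theorem isClosedIdealOf_rightAnnihilator (hB : IsClosed (B : Set A)) {Y : Set A}
    (hY : ∀ y ∈ Y, ∀ b ∈ B, y * b ∈ Y) :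
    IsClosedIdealOf B {b | b ∈ B ∧ ∀ y ∈ Y, y * b = 0} := by
  refine ⟨fun _ hb => hb.1, ?_, ⟨zero_mem B, fun y _ => mul_zero y⟩,
    fun a b ha hb => ⟨add_mem ha.1 hb.1, fun y hy => by
      rw [mul_add, ha.2 y hy, hb.2 y hy, add_zero]⟩,
    fun c a ha => ⟨SMulMemClass.smul_mem c ha.1, fun y hy => by
      rw [mul_smul_comm, ha.2 y hy, smul_zero]⟩,
    fun b a hb ha => ⟨⟨mul_mem hb ha.1, fun y hy => by
      rw [← mul_assoc]; exact ha.2 _ (hY y hy b hb)⟩,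
      ⟨mul_mem ha.1 hb, fun y hy => by rw [← mul_assoc, ha.2 y hy, zero_mul]⟩⟩⟩
  simp only [Set.ofPred_and, Set.ofPred_forall]
  exact hB.inter (isClosed_biInter fun y _ => isClosed_eq (continuous_const_mul y) continuous_const)

theorem isClosedIdealOf_leftAnnihilator (hB : IsClosed (B : Set A)) {Y : Set A}
    (hY : ∀ b ∈ B, ∀ y ∈ Y, b * y ∈ Y) :
    IsClosedIdealOf B {a | a ∈ B ∧ ∀ y ∈ Y, a * y = 0} := by
  refine ⟨fun _ ha => ha.1, ?_, ⟨zero_mem B, fun y _ => zero_mul y⟩,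
    fun a b ha hb => ⟨add_mem ha.1 hb.1, fun y hy => by
      rw [add_mul, ha.2 y hy, hb.2 y hy, add_zero]⟩,
    fun c a ha => ⟨SMulMemClass.smul_mem c ha.1, fun y hy => by
      rw [smul_mul_assoc, ha.2 y hy, smul_zero]⟩,
    fun b a hb ha => ⟨⟨mul_mem hb ha.1, fun y hy => by rw [mul_assoc, ha.2 y hy, mul_zero]⟩,
      ⟨mul_mem ha.1 hb, fun y hy => by rw [mul_assoc]; exact ha.2 _ (hY b hb y hy)⟩⟩⟩
  simp only [Set.ofPred_and, Set.ofPred_forall]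
  exact hB.inter (isClosed_biInter fun y _ => isClosed_eq (continuous_mul_const y) continuous_const)

theorem closedIdealGenIn_mul_eq_zero (hB : IsClosed (B : Set A)) {p q : A}
    (hp : IsIdempotentElem p) (hpB : p ∈ B) (hqB : q ∈ B) (hpq : ∀ c ∈ B, p * c * q = 0) :
    ∀ a ∈ closedIdealGenIn B {p}, ∀ b ∈ closedIdealGenIn B {q}, a * b = 0 := by
  have hIq : closedIdealGenIn B {q} ⊆ {b | b ∈ B ∧ ∀ y ∈ (p * ·) '' B, y * b = 0} := by
    refine closedIdealGenIn_subset (isClosedIdealOf_rightAnnihilator hB ?_) ?_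
    · rintro _ ⟨c, hc, rfl⟩ b hb
      exact ⟨c * b, mul_mem hc hb, (mul_assoc p c b).symm⟩
    · exact Set.singleton_subset_iff.2 ⟨hqB, by rintro _ ⟨c, hc, rfl⟩; exact hpq c hc⟩
  have hIp :
      closedIdealGenIn B {p} ⊆ {a | a ∈ B ∧ ∀ b ∈ closedIdealGenIn B {q}, a * b = 0} := by
    refine closedIdealGenIn_subset (isClosedIdealOf_leftAnnihilator hB ?_) ?_
    · exact fun b hb y hy =>
        ((isClosedIdealOf_closedIdealGenIn hB (Set.singleton_subset_iff.2 hqB)).2.2.2.2.2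
          b y hb hy).1
    · refine Set.singleton_subset_iff.2 ⟨hpB, fun b hb => ?_⟩
      rw [← hp.eq]
      exact (hIq hb).2 _ ⟨p, hpB, rfl⟩
  exact fun a ha => (hIp ha).2

end ClosedIdeals

theorem inter_eq_zero_of_mul_eq_zero {A : Type*} [NonUnitalCStarAlgebra A]
    {B : NonUnitalStarSubalgebra ℂ A} {I J : Set A} (hI : IsClosedIdealOf B I)
    (hJ : IsClosedIdealOf B J) (hIJ : ∀ a ∈ I, ∀ b ∈ J, a * b = 0) : I ∩ J = {0} := by
  refine Set.eq_singleton_iff_unique_mem.mpr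
    ⟨⟨hI.2.2.1, hJ.2.2.1⟩, fun a ⟨haI, haJ⟩ => ?_⟩
  exact eq_zero_of_mul_star_mul_self_eq_zero <|
    hIJ a haI _ (hJ.2.2.2.2.2 _ a (star_mem (hJ.1 haJ)) haJ).1

namespace Digraph'

variable {G : Digraph'} {A : Type*} [NonUnitalCStarAlgebra A] {P : G.V → A} {S : G.E → A}

def ckMonomials (P : G.V → A) (S : G.E → A) : Subsemigroup A :=
  Subsemigroup.closure (Set.range S ∪ Set.range P)

/-- The span of the elements `P v * star μ`, `μ ∈ ckMonomials P S`. When `v` is a sink it is a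
right module over the `*`-algebra generated by the family, because `P v * S e = 0` for every
edge `e`. -/
def rowSpan (P : G.V → A) (S : G.E → A) (v : G.V) : Submodule ℂ A :=
  Submodule.span ℂ ((fun x => P v * star x) '' (ckMonomials P S : Set A))

theorem mul_star_monomial_mem_rowSpan (v : G.V) {x : A} (hx : x ∈ ckMonomials P S) :
    P v * star x ∈ rowSpan P S v :=
  Submodule.subset_span ⟨x, hx, rfl⟩

theorem star_mem_rightStabilizer_rowSpan (f : G.E) (v : G.V) :
    star (S f) ∈ (rowSpan P S v).rightStabilizer := by
  refine Submodule.mem_rightStabilizer_span ?_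
  rintro _ ⟨x, hx, rfl⟩
  rw [mul_assoc, ← star_mul]
  exact mul_star_monomial_mem_rowSpan v
    (mul_mem (Subsemigroup.subset_closure (.inl ⟨f, rfl⟩)) hx)

section CKFamily

variable [PartialOrder A] [StarOrderedRing A]

theorem IsCKFamily.isStarProjection_proj (hCK : G.IsCKFamily P S) (v : G.V) :
    IsStarProjection (P v) :=
  ⟨hCK.proj_idem v, hCK.proj_star v⟩

theorem IsCKFamily.mul_proj_rng (hCK : G.IsCKFamily P S) (e : G.E) :
    S e * P (G.rng e) = S e := by
  rw [← hCK.ck1]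
  exact mul_star_mul_self_of_isIdempotentElem (by rw [hCK.ck1]; exact hCK.proj_idem _)

theorem IsCKFamily.mul_star_mul_self (hCK : G.IsCKFamily P S) (e : G.E) :
    S e * star (S e) * S e = S e := by
  rw [mul_assoc, hCK.ck1, hCK.mul_proj_rng]

theorem IsCKFamily.isStarProjection_range (hCK : G.IsCKFamily P S) (e : G.E) :
    IsStarProjection (S e * star (S e)) := by
  refine ⟨?_, by rw [IsSelfAdjoint, star_mul, star_star]⟩
  rw [IsIdempotentElem, ← mul_assoc, hCK.mul_star_mul_self]

theorem IsCKFamily.proj_src_mul (hCK : G.IsCKFamily P S) (e : G.E) :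
    P (G.src e) * S e = S e := by
  have h := ((hCK.isStarProjection_range e).le_iff_mul_eq_right
    (hCK.isStarProjection_proj _)).mp (hCK.ck2 e)
  rw [← hCK.mul_star_mul_self e, ← mul_assoc, h]

theorem IsCKFamily.proj_mul_eq_zero (hCK : G.IsCKFamily P S) {u : G.V} {e : G.E}
    (h : u ≠ G.src e) : P u * S e = 0 := by
  rw [← hCK.proj_src_mul e, ← mul_assoc, hCK.proj_orth u _ h, zero_mul]

theorem IsCKFamily.proj_mul_eq_zero_of_sink (hCK : G.IsCKFamily P S) {v : G.V}
    (hv : G.src ⁻¹' {v} = ∅) (e : G.E) : P v * S e = 0 :=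
  hCK.proj_mul_eq_zero fun h => Set.eq_empty_iff_forall_notMem.mp hv e h.symm

theorem IsCKFamily.star_mul_eq_zero (hCK : G.IsCKFamily P S) {e f : G.E} (h : e ≠ f) :
    star (S e) * S f = 0 := by
  have he : star (S e) * (S e * star (S e)) = star (S e) := by
    simpa only [star_mul, star_star] using congrArg star (hCK.mul_star_mul_self e)
  calc star (S e) * S f
      = star (S e) * (S e * star (S e)) * (S f * star (S f) * S f) := by
        rw [he, hCK.mul_star_mul_self]
    _ = star (S e) * (S e * star (S e) * (S f * star (S f))) * S f := by
        simp only [mul_assoc]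
    _ = 0 := by rw [hCK.range_orth e f h, mul_zero, zero_mul]

theorem IsCKFamily.proj_mul_monomial_of_sink (hCK : G.IsCKFamily P S) {w : G.V}
    (hw : G.src ⁻¹' {w} = ∅) {x : A} (hx : x ∈ ckMonomials P S) :
    P w * x = 0 ∨ P w * x = P w := by
  induction hx using Subsemigroup.closure_induction with
  | mem x hx =>
    rcases hx with ⟨e, rfl⟩ | ⟨u, rfl⟩
    · exact .inl (hCK.proj_mul_eq_zero_of_sink hw e)
    · by_cases h : w = u
      · exact .inr (h ▸ hCK.proj_idem w)
      · exact .inl (hCK.proj_orth w u h)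
  | mul a b _ _ iha ihb =>
    rw [← mul_assoc]
    rcases iha with h | h
    · exact .inl (by rw [h, zero_mul])
    · rwa [h]

theorem IsCKFamily.star_mul_monomial (hCK : G.IsCKFamily P S) (f : G.E) {x : A}
    (hx : x ∈ ckMonomials P S) :
    star (S f) * x = 0 ∨ star (S f) * x ∈ ckMonomials P S ∨ star (S f) * x = star (S f) := by
  induction hx using Subsemigroup.closure_induction with
  | mem x hx =>
    rcases hx with ⟨e, rfl⟩ | ⟨u, rfl⟩
    · by_cases h : f = e
      · subst h
        exact .inr (.inl (hCK.ck1 f ▸ Subsemigroup.subset_closure (.inr ⟨_, rfl⟩)))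
      · exact .inl (hCK.star_mul_eq_zero h)
    · have hstar : star (S f) * P u = star (P u * S f) := by rw [star_mul, hCK.proj_star]
      by_cases h : u = G.src f
      · exact .inr (.inr (by rw [hstar, h, hCK.proj_src_mul]))
      · exact .inl (by rw [hstar, hCK.proj_mul_eq_zero h, star_zero])
  | mul a b _ hb iha ihb =>
    rw [← mul_assoc]
    rcases iha with h | h | h
    · exact .inl (by rw [h, zero_mul])
    · exact .inr (.inl (mul_mem h hb))
    · rwa [h]

theorem IsCKFamily.proj_mem_rightStabilizer_rowSpan (hCK : G.IsCKFamily P S) (u v : G.V) :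
    P u ∈ (rowSpan P S v).rightStabilizer := by
  refine Submodule.mem_rightStabilizer_span ?_
  rintro _ ⟨x, hx, rfl⟩
  rw [mul_assoc, ← hCK.proj_star u, ← star_mul]
  exact mul_star_monomial_mem_rowSpan v
    (mul_mem (Subsemigroup.subset_closure (.inr ⟨u, rfl⟩)) hx)

theorem IsCKFamily.mem_rightStabilizer_rowSpan_of_sink (hCK : G.IsCKFamily P S) {v : G.V}
    (hv : G.src ⁻¹' {v} = ∅) (f : G.E) : S f ∈ (rowSpan P S v).rightStabilizer := by
  refine Submodule.mem_rightStabilizer_span ?_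
  rintro _ ⟨x, hx, rfl⟩
  rw [mul_assoc, ← star_star (S f), ← star_mul]
  rcases hCK.star_mul_monomial f hx with h | h | h
  · rw [h, star_zero, mul_zero]
    exact zero_mem _
  · exact mul_star_monomial_mem_rowSpan v h
  · rw [h, star_star, hCK.proj_mul_eq_zero_of_sink hv]
    exact zero_mem _

theorem IsCKFamily.adjoin_le_rightStabilizer_rowSpan (hCK : G.IsCKFamily P S) {v : G.V}
    (hv : G.src ⁻¹' {v} = ∅) :
    (NonUnitalStarAlgebra.adjoin ℂ (Set.range S ∪ Set.range P)).toNonUnitalSubalgebra ≤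
      (rowSpan P S v).rightStabilizer := by
  rw [NonUnitalStarAlgebra.adjoin_toNonUnitalSubalgebra]
  refine NonUnitalAlgebra.adjoin_le ?_
  rintro g ((⟨f, rfl⟩ | ⟨u, rfl⟩) | (⟨f, hf⟩ | ⟨u, hu⟩))
  · exact hCK.mem_rightStabilizer_rowSpan_of_sink hv f
  · exact hCK.proj_mem_rightStabilizer_rowSpan u v
  · rw [← star_star g, ← hf]
    exact star_mem_rightStabilizer_rowSpan f v
  · rw [← star_star g, ← hu, hCK.proj_star]
    exact hCK.proj_mem_rightStabilizer_rowSpan u v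

theorem IsCKFamily.mul_proj_eq_zero_of_mem_rowSpan (hCK : G.IsCKFamily P S) {v w : G.V}
    (hvw : v ≠ w) (hw : G.src ⁻¹' {w} = ∅) {r : A} (hr : r ∈ rowSpan P S v) :
    r * P w = 0 := by
  suffices rowSpan P S v ≤ LinearMap.ker (LinearMap.mulRight ℂ (P w)) from this hr
  refine Submodule.span_le.mpr ?_
  rintro _ ⟨x, hx, rfl⟩
  rw [SetLike.mem_coe, LinearMap.mem_ker, LinearMap.mulRight_apply, mul_assoc, ← hCK.proj_star w,
    ← star_mul]
  rcases hCK.proj_mul_monomial_of_sink hw hx with h | h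
  · rw [h, star_zero, mul_zero]
  · rw [h, hCK.proj_star, hCK.proj_orth v w hvw]

theorem IsCKFamily.proj_mul_mul_proj_eq_zero_of_sinks (hCK : G.IsCKFamily P S) {v w : G.V}
    (hvw : v ≠ w) (hv : G.src ⁻¹' {v} = ∅) (hw : G.src ⁻¹' {w} = ∅) :
    ∀ b ∈ cstarSP G P S, P v * b * P w = 0 := by
  have hPv : P v ∈ rowSpan P S v := by
    simpa only [hCK.proj_star, hCK.proj_idem] using
      mul_star_monomial_mem_rowSpan (P := P) (S := S) v
        (Subsemigroup.subset_closure (.inr ⟨v, rfl⟩))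
  intro b hb
  refine closure_minimal (fun d hd => ?_)
    (isClosed_eq (by fun_prop) continuous_const : IsClosed {b : A | P v * b * P w = 0}) hb
  exact hCK.mul_proj_eq_zero_of_mem_rowSpan hvw hw
    (hCK.adjoin_le_rightStabilizer_rowSpan hv hd (P v) hPv)

end CKFamily

end Digraph'

theorem stmt_14_general (G : Digraph')
    {A : Type*} [NonUnitalCStarAlgebra A] [PartialOrder A] [StarOrderedRing A]
    (P : G.V → A) (S : G.E → A) (hCK : G.IsCKFamily P S)
    (v w : G.V) (hvw : v ≠ w)
    (hv : G.src ⁻¹' {v} = ∅) (hw : G.src ⁻¹' {w} = ∅) :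
    (∀ a ∈ closedIdealGenIn (cstarSP G P S) {P v},
      ∀ b ∈ closedIdealGenIn (cstarSP G P S) {P w}, a * b = 0) ∧
    closedIdealGenIn (cstarSP G P S) {P v} ∩
      closedIdealGenIn (cstarSP G P S) {P w} = {0} := by
  set D := NonUnitalStarAlgebra.adjoin ℂ (Set.range S ∪ Set.range P)
  set B := D.topologicalClosure
  have hB : IsClosed (B : Set A) := D.isClosed_topologicalClosure
  have hPB (u : G.V) : P u ∈ B :=
    D.le_topologicalClosure (NonUnitalStarAlgebra.subset_adjoin ℂ _ (Or.inr ⟨u, rfl⟩))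
  have horth := closedIdealGenIn_mul_eq_zero (B := B.toNonUnitalSubalgebra) hB
    (hCK.proj_idem v) (hPB v) (hPB w) (hCK.proj_mul_mul_proj_eq_zero_of_sinks hvw hv hw)
  have hI (u : G.V) := isClosedIdealOf_closedIdealGenIn (B := B.toNonUnitalSubalgebra) hB
    (Set.singleton_subset_iff.mpr (hPB u))
  exact ⟨horth, inter_eq_zero_of_mul_eq_zero (B := B) (hI v) (hI w) horth⟩

/-- If `v` and `w` are distinct sinks, then the closed two-sided ideals
`I_v` and `I_w` of `C*(S, P)` generated by `P v` and `P w` are mutually orthogonal;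
in particular their intersection is `{0}`. -/
theorem stmt_14 (G : Digraph') [Countable G.V] [Countable G.E]
    {A : Type*} [NonUnitalCStarAlgebra A] [PartialOrder A] [StarOrderedRing A]
    (P : G.V → A) (S : G.E → A) (hCK : G.IsCKFamily P S)
    (v w : G.V) (hvw : v ≠ w)
    (hv : G.src ⁻¹' {v} = ∅) (hw : G.src ⁻¹' {w} = ∅) :
    (∀ a ∈ closedIdealGenIn (cstarSP G P S) {P v},
      ∀ b ∈ closedIdealGenIn (cstarSP G P S) {P w}, a * b = 0) ∧
    closedIdealGenIn (cstarSP G P S) {P v} ∩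
      closedIdealGenIn (cstarSP G P S) {P w} = {0} :=
  stmt_14_general G P S hCK v w hvw hv hw
end
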